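/- Let H be a finite-dimensional complex inner product space, let P_E and P_O be orthogonal projections on H with P_E + P_O = 1, let ψ and φ be unit vectors, and let p, q > 0 with p + q = 1. Set Δ := p|ψ⟩⟨ψ| − q|φ⟩⟨φ|, Δ_E := P_E Δ P_E, Δ_O := P_O Δ P_O. Then the infimum over all operators Π with 0 ≤ Π ≤ 1 and Π = P_E Π P_E + P_O Π P_O of the error probability p⟪ψ, (1−Π)ψ⟫ + q⟪φ, Π φ⟫ equals ½(1 − ‖Δ_E + Δ_O‖₁), where ‖Y‖₁ = Tr √(Y† Y). -/

import Mathlib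

open Matrix
open scoped ComplexOrder Kronecker

/-- The trace norm `‖Y‖₁ = Tr √(Yᴴ Y)` of a complex matrix. -/
noncomputable def traceNorm {m : Type*} [Fintype m] [DecidableEq m]
    (Y : Matrix m m ℂ) : ℝ :=
  ((Matrix.posSemidef_conjTranspose_mul_self Y).isHermitian.eigenvectorUnitary.1 *
      diagonal (((↑) : ℝ → ℂ) ∘ (√·) ∘ (Matrix.posSemidef_conjTranspose_mul_self Y).isHermitian.eigenvalues) *
      (star (Matrix.posSemidef_conjTranspose_mul_self Y).isHermitian.eigenvectorUnitary :
        Matrix m m ℂ)).trace.re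

/-- The inner product `⟪x, y⟫ = ∑ i, conj (x i) * y i` on `m → ℂ`. -/
noncomputable def cinner {m : Type*} [Fintype m] (x y : m → ℂ) : ℂ := star x ⬝ᵥ y

/-- An orthogonal projection: a self-adjoint idempotent matrix. -/
def IsOrthoProj {m : Type*} [Fintype m] (P : Matrix m m ℂ) : Prop :=
  P.IsHermitian ∧ P * P = P

/-- An effect: an operator `S` with `0 ≤ S ≤ 1`. -/
def IsEffect {m : Type*} [Fintype m] [DecidableEq m] (S : Matrix m m ℂ) : Prop :=
  S.PosSemidef ∧ (1 - S).PosSemidef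

/-- The rank-one operator `|ψ⟩⟨ψ|`. -/
noncomputable def outer {m : Type*} (ψ : m → ℂ) : Matrix m m ℂ :=
  Matrix.vecMulVec ψ (star ψ)

/-!
A block-diagonal effect `T` commutes with `P_E`, so by cyclicity of the trace
`Tr (T Δ) = Tr (T Δ')` for the pinching `Δ' = P_E Δ P_E + P_O Δ P_O = Δ_E + Δ_O`, and the error
probability equals `p - Re Tr (T Δ')`. Helstrom's argument in an eigenbasis of `Δ'` gives
`Re Tr (T Δ') ≤ ∑ λᵢ⁺` for every effect `T`, with equality for the spectral projection of `Δ'`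
onto its positive eigenvalues; that projection is a function of `Δ'`, which commutes with `P_E`,
so it is block-diagonal as well. Finally `∑ λᵢ⁺ = (Tr Δ' + ‖Δ'‖₁) / 2` and `Tr Δ' = Tr Δ = p - q`.
-/

open scoped MatrixOrder

section Pinching

variable {R : Type*} [Ring R] {p : R}

def pinching (p x : R) : R := p * x * p + (1 - p) * x * (1 - p)

lemma IsIdempotentElem.mul_pinching (hp : IsIdempotentElem p) (x : R) :
    p * pinching p x = p * x * p := by
  rw [pinching, mul_add, ← mul_assoc, ← mul_assoc, ← mul_assoc, ← mul_assoc, hp.eq,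
    hp.mul_one_sub_self, zero_mul, zero_mul, add_zero]

lemma IsIdempotentElem.pinching_mul (hp : IsIdempotentElem p) (x : R) :
    pinching p x * p = p * x * p := by
  rw [pinching, add_mul, mul_assoc _ p p, hp.eq, mul_assoc _ (1 - p) p, hp.one_sub_mul_self,
    mul_zero, add_zero]

lemma IsIdempotentElem.commute_pinching (hp : IsIdempotentElem p) (x : R) :
    Commute p (pinching p x) :=
  (hp.mul_pinching x).trans (hp.pinching_mul x).symm

lemma IsIdempotentElem.pinching_eq_self_iff (hp : IsIdempotentElem p) {x : R} :
    pinching p x = x ↔ Commute p x := by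
  refine ⟨fun h => h ▸ hp.commute_pinching x, fun h => ?_⟩
  have hq : Commute (1 - p) x := (Commute.one_left x).sub_left h
  rw [pinching, h.eq, hq.eq, mul_assoc, mul_assoc, hp.eq, hp.one_sub.eq, ← mul_add,
    add_sub_cancel, mul_one]

lemma IsIdempotentElem.pinching_one (hp : IsIdempotentElem p) : pinching p 1 = 1 := by
  rw [pinching, mul_one, mul_one, hp.eq, hp.one_sub.eq, add_sub_cancel]

lemma IsSelfAdjoint.pinching [StarRing R] {x : R} (hx : IsSelfAdjoint x) (hp : IsSelfAdjoint p) :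
    IsSelfAdjoint (pinching p x) :=
  (hx.conjugate_self hp).add (hx.conjugate_self ((IsSelfAdjoint.one R).sub hp))

end Pinching

namespace Matrix

section Pinching

variable {m R : Type*} [Fintype m] [DecidableEq m] [CommRing R]

lemma trace_mul_pinching (P X Y : Matrix m m R) :
    (X * pinching P Y).trace = (pinching P X * Y).trace := by
  have cycle (Q : Matrix m m R) : (X * (Q * Y * Q)).trace = (Q * X * Q * Y).trace := by
    rw [← mul_assoc, trace_mul_cycle, ← mul_assoc]
  rw [pinching, pinching, mul_add, add_mul, trace_add, trace_add, cycle, cycle]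

lemma trace_pinching {P : Matrix m m R} (hP : IsIdempotentElem P) (X : Matrix m m R) :
    (pinching P X).trace = X.trace := by
  have h := trace_mul_pinching P 1 X
  rwa [one_mul, hP.pinching_one, one_mul] at h

end Pinching

variable {m 𝕜 : Type*} [Fintype m] [DecidableEq m] [RCLike 𝕜] {A : Matrix m m 𝕜}

lemma IsHermitian.trace_cfc (hA : A.IsHermitian) (f : ℝ → ℝ) :
    (cfc f A).trace = ∑ i, (f (hA.eigenvalues i) : 𝕜) := by
  rw [hA.cfc_eq, IsHermitian.cfc, Unitary.conjStarAlgAut_apply, trace_mul_cycle,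
    Unitary.coe_star_mul_self, one_mul, trace_diagonal]
  rfl

lemma IsHermitian.trace_mul_eq_sum_eigenvalues (hA : A.IsHermitian) (T : Matrix m m 𝕜) :
    (T * A).trace = ∑ i, (star (hA.eigenvectorUnitary : Matrix m m 𝕜) * T *
      hA.eigenvectorUnitary) i i * hA.eigenvalues i := by
  conv_lhs => rw [hA.spectral_theorem, Unitary.conjStarAlgAut_apply, ← mul_assoc,
    trace_mul_cycle, ← mul_assoc]
  simp only [trace, diag, mul_diagonal, Function.comp_apply]

lemma IsHermitian.traceNorm_eq_sum_abs_eigenvalues {A : Matrix m m ℂ} (hA : A.IsHermitian) :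
    traceNorm A = ∑ i, |hA.eigenvalues i| := by
  have hAA := (posSemidef_conjTranspose_mul_self A).isHermitian
  have hsq : Aᴴ * A = cfc (fun t : ℝ => t * t) A := by
    rw [cfc_mul (fun t : ℝ => t) (fun t : ℝ => t) A, cfc_id' ℝ A, hA.eq]
  have habs : cfc Real.sqrt (Aᴴ * A) = cfc (fun t : ℝ => |t|) A := by
    rw [hsq, ← cfc_comp Real.sqrt (fun t : ℝ => t * t) A]
    exact cfc_congr fun t _ => Real.sqrt_mul_self_eq_abs t
  calc traceNorm A = (cfc Real.sqrt (Aᴴ * A)).trace.re := by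
        rw [hAA.cfc_eq, IsHermitian.cfc, Unitary.conjStarAlgAut_apply]; rfl
    _ = ∑ i, |hA.eigenvalues i| := by
        rw [habs, hA.trace_cfc]; simp

lemma IsHermitian.sum_max_eigenvalues_zero {A : Matrix m m ℂ} (hA : A.IsHermitian) :
    ∑ i, max (hA.eigenvalues i) 0 = (A.trace.re + traceNorm A) / 2 := by
  rw [hA.traceNorm_eq_sum_abs_eigenvalues, hA.trace_eq_sum_eigenvalues, Complex.re_sum,
    ← Finset.sum_add_distrib, Finset.sum_div]
  refine Finset.sum_congr rfl fun i _ => ?_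
  have h₁ := max_zero_sub_max_neg_zero_eq_self (hA.eigenvalues i)
  have h₂ := max_zero_add_max_neg_zero_eq_abs_self (hA.eigenvalues i)
  simp only [Complex.coe_algebraMap, Complex.ofReal_re]
  linarith

end Matrix

namespace IsEffect

variable {m : Type*} [Fintype m] [DecidableEq m] {S : Matrix m m ℂ}

lemma conjTranspose_mul_mul_unitary (hS : IsEffect S) {U : Matrix m m ℂ}
    (hU : U ∈ unitaryGroup m ℂ) : IsEffect (Uᴴ * S * U) := by
  refine ⟨hS.1.conjTranspose_mul_mul_same U, ?_⟩
  have h : 1 - Uᴴ * S * U = Uᴴ * (1 - S) * U := by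
    rw [mul_sub, sub_mul, mul_one, ← star_eq_conjTranspose, (mem_unitaryGroup_iff').1 hU]
  exact h ▸ hS.2.conjTranspose_mul_mul_same U

lemma re_diag_mem_Icc (hS : IsEffect S) (i : m) : (S i i).re ∈ Set.Icc 0 1 := by
  have h₀ := (Complex.le_def.1 (hS.1.diag_nonneg (i := i))).1
  have h₁ := (Complex.le_def.1 (hS.2.diag_nonneg (i := i))).1
  simp only [Matrix.sub_apply, one_apply_eq, Complex.zero_re, Complex.sub_re,
    Complex.one_re] at h₀ h₁
  exact ⟨h₀, by linarith⟩

lemma re_trace_mul_le {A : Matrix m m ℂ} (hS : IsEffect S) (hA : A.IsHermitian) :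
    (S * A).trace.re ≤ ∑ i, max (hA.eigenvalues i) 0 := by
  rw [hA.trace_mul_eq_sum_eigenvalues, Complex.re_sum]
  refine Finset.sum_le_sum fun i _ => ?_
  obtain ⟨h₀, h₁⟩ := (hS.conjTranspose_mul_mul_unitary hA.eigenvectorUnitary.2).re_diag_mem_Icc i
  simp only [Complex.coe_algebraMap, Complex.re_mul_ofReal, le_sup_iff]
  rcases le_total 0 (hA.eigenvalues i) with hl | hl
  · exact .inl (mul_le_of_le_one_left hl h₁)
  · exact .inr (mul_nonpos_of_nonneg_of_nonpos h₀ hl)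

end IsEffect

section PosSpectralProj

variable {m : Type*} [Fintype m] [DecidableEq m]

noncomputable def posSpectralProj (A : Matrix m m ℂ) : Matrix m m ℂ :=
  cfc (fun t : ℝ => if 0 < t then 1 else 0) A

lemma isEffect_posSpectralProj (A : Matrix m m ℂ) : IsEffect (posSpectralProj A) :=
  ⟨nonneg_iff_posSemidef.1 <| cfc_nonneg fun t _ => by split_ifs <;> norm_num,
    le_iff.1 <| cfc_le_one _ _ fun t _ => by split_ifs <;> norm_num⟩

lemma re_trace_posSpectralProj_mul {A : Matrix m m ℂ} (hA : A.IsHermitian) :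
    (posSpectralProj A * A).trace.re = ∑ i, max (hA.eigenvalues i) 0 := by
  -- every function is continuous on the finite spectrum, so `cfc_mul` applies to the step function
  have h : posSpectralProj A * A = cfc (fun t : ℝ => max t 0) A := by
    nth_rw 2 [← cfc_id' ℝ A]
    rw [posSpectralProj, ← cfc_mul _ _ A (A.finite_real_spectrum.continuousOn _)]
    refine cfc_congr fun t _ => ?_
    split_ifs with ht
    · rw [one_mul, max_eq_left ht.le]
    · rw [zero_mul, max_eq_right (not_lt.1 ht)]
  rw [h, hA.trace_cfc]
  simp

lemma Commute.posSpectralProj {A B : Matrix m m ℂ} (h : Commute A B) :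
    Commute (posSpectralProj A) B :=
  h.cfc_real _

end PosSpectralProj

section Outer

variable {m : Type*} [Fintype m]

lemma trace_mul_outer (T : Matrix m m ℂ) (ψ : m → ℂ) :
    (T * outer ψ).trace = cinner ψ (T *ᵥ ψ) := by
  rw [outer, mul_vecMulVec, trace_vecMulVec, dotProduct_comm, cinner]

lemma trace_outer [DecidableEq m] (ψ : m → ℂ) : (outer ψ).trace = cinner ψ ψ := by
  simpa using trace_mul_outer 1 ψ

lemma isHermitian_outer (ψ : m → ℂ) : (outer ψ).IsHermitian :=
  (posSemidef_vecMulVec_self_star ψ).isHermitian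

end Outer

theorem optimal_locc_error_general
    {n : ℕ} (P_E P_O : Matrix (Fin n) (Fin n) ℂ)
    (hPE : IsOrthoProj P_E) (hsum : P_E + P_O = 1)
    (ψ φ : Fin n → ℂ) (hψ : cinner ψ ψ = 1) (hφ : cinner φ φ = 1)
    (p q : ℝ) (hpq : p + q = 1)
    (Δ : Matrix (Fin n) (Fin n) ℂ) (hΔ : Δ = (p : ℂ) • outer ψ - (q : ℂ) • outer φ) :
    IsGLB {x : ℝ | ∃ T : Matrix (Fin n) (Fin n) ℂ, IsEffect T ∧
        T = P_E * T * P_E + P_O * T * P_O ∧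
        x = p * (cinner ψ ((1 - T).mulVec ψ)).re + q * (cinner φ (T.mulVec φ)).re}
      ((1 - traceNorm (P_E * Δ * P_E + P_O * Δ * P_O)) / 2) := by
  obtain rfl : P_O = 1 - P_E := eq_sub_of_add_eq' hsum
  have hP : IsIdempotentElem P_E := hPE.2
  have hΔ_herm : Δ.IsHermitian := hΔ ▸ ((isHermitian_outer ψ).smul (Complex.conj_ofReal p)).sub
    ((isHermitian_outer φ).smul (Complex.conj_ofReal q))
  change IsGLB _ ((1 - traceNorm (pinching P_E Δ)) / 2)
  set A := pinching P_E Δ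
  have hA : A.IsHermitian := IsSelfAdjoint.pinching hΔ_herm hPE.1
  have hA_trace : A.trace.re = p - q := by
    rw [trace_pinching hP, hΔ, trace_sub, trace_smul, trace_smul, trace_outer, trace_outer, hψ, hφ]
    simp
  have herror (T : Matrix (Fin n) (Fin n) ℂ) (hT : Commute P_E T) :
      p * (cinner ψ ((1 - T).mulVec ψ)).re + q * (cinner φ (T.mulVec φ)).re
        = p - (T * A).trace.re := by
    rw [trace_mul_pinching, hP.pinching_eq_self_iff.2 hT, ← trace_mul_outer, ← trace_mul_outer,
      sub_mul, one_mul, trace_sub, trace_outer, hψ, hΔ, mul_sub, Matrix.mul_smul,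
      Matrix.mul_smul, trace_sub, trace_smul, trace_smul]
    simp only [Complex.sub_re, Complex.one_re, smul_eq_mul, Complex.re_ofReal_mul]
    ring
  have hoptimal : p - ∑ i, max (hA.eigenvalues i) 0 = (1 - traceNorm A) / 2 := by
    rw [hA.sum_max_eigenvalues_zero, hA_trace]
    linarith
  have hcomm : Commute P_E (posSpectralProj A) :=
    (hP.commute_pinching Δ).symm.posSpectralProj.symm
  refine IsLeast.isGLB ⟨⟨posSpectralProj A, isEffect_posSpectralProj A,
    (hP.pinching_eq_self_iff.2 hcomm).symm, ?_⟩, ?_⟩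
  · rw [herror _ hcomm, re_trace_posSpectralProj_mul hA, hoptimal]
  · rintro _ ⟨T, hT, hTP, rfl⟩
    rw [herror T (hP.pinching_eq_self_iff.1 hTP.symm), ← hoptimal]
    linarith [hT.re_trace_mul_le hA]

/-- **Theorem 4.** The optimal error probability for discriminating `p|ψ⟩⟨ψ|` from
`q|φ⟩⟨φ|` by block-diagonal (separable, equivalently LOCC) effects is
`(1 − ‖Δ_E + Δ_O‖₁)/2`. -/
theorem optimal_locc_error
    {n : ℕ} (P_E P_O : Matrix (Fin n) (Fin n) ℂ)
    (hPE : IsOrthoProj P_E) (hPO : IsOrthoProj P_O) (hsum : P_E + P_O = 1)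
    (ψ φ : Fin n → ℂ) (hψ : cinner ψ ψ = 1) (hφ : cinner φ φ = 1)
    (p q : ℝ) (hp : 0 < p) (hq : 0 < q) (hpq : p + q = 1)
    (Δ : Matrix (Fin n) (Fin n) ℂ) (hΔ : Δ = (p : ℂ) • outer ψ - (q : ℂ) • outer φ) :
    IsGLB {x : ℝ | ∃ T : Matrix (Fin n) (Fin n) ℂ, IsEffect T ∧
        T = P_E * T * P_E + P_O * T * P_O ∧
        x = p * (cinner ψ ((1 - T).mulVec ψ)).re + q * (cinner φ (T.mulVec φ)).re}
      ((1 - traceNorm (P_E * Δ * P_E + P_O * Δ * P_O)) / 2) :=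
  optimal_locc_error_general P_E P_O hPE hsum ψ φ hψ hφ p q hpq Δ hΔ
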